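/- arXiv:2507.06408 — 3 statements merged into one kernel-verified Lean document; each statement's English description precedes it below -/
import Mathlib

section
/- Let K ⊂ ℝⁿ be compact and path-connected such that any two points x₀, y₀ ∈ K are joined by a Lipschitz path γ : [0,1] → K with total variation at most Λ ‖x₀ − y₀‖ for a fixed constant Λ > 0. Suppose the flow φ satisfies local contraction: there exist δ > 0, ν > 0, C > 0 such that whenever x₀, y₀ ∈ K with ‖x₀ − y₀‖ < δ, then ‖φ(t,x₀) − φ(t,y₀)‖ ≤ C e^{-ν t} ‖x₀ − y₀‖ for all t ≥ 0. Then for all x₀, y₀ ∈ K and all t ≥ 0, ‖φ(t,x₀) − φ(t,y₀)‖ ≤ C Λ e^{-ν t} ‖x₀ − y₀‖. -/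
/-!
Subdivide the short path `γ` from `x₀` to `y₀` so finely that consecutive points are
`δ`-close. Local contraction then applies to each consecutive pair, and the triangle inequality
bounds `‖φ t x₀ - φ t y₀‖` by `C e^{-νt}` times the length of the inscribed polygon, which is at
most the variation `Λ ‖x₀ - y₀‖` of `γ`.
-/

open Set

section

variable {α β : Type*} [PseudoMetricSpace α] [PseudoMetricSpace β]

lemma exists_monotone_Icc_subdivision_dist_lt {γ : ℝ → α} (hγ : ContinuousOn γ (Icc 0 1))
    {δ : ℝ} (hδ : 0 < δ) :
    ∃ (N : ℕ) (u : ℕ → ℝ), Monotone u ∧ (∀ i, u i ∈ Icc 0 1) ∧ u 0 = 0 ∧ u N = 1 ∧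
      ∀ i, dist (γ (u (i + 1))) (γ (u i)) < δ := by
  obtain ⟨ε, hε, hγε⟩ := Metric.uniformContinuousOn_iff.mp
    (isCompact_Icc.uniformContinuousOn_of_continuous hγ) δ hδ
  obtain ⟨N, hN⟩ := exists_nat_one_div_lt hε
  have hN₀ : (0 : ℝ) < N + 1 := by positivity
  set u : ℕ → ℝ := fun i => (min i (N + 1) : ℕ) / (N + 1 : ℝ)
  have hu_mono : Monotone u := fun i j hij => by
    simp only [u]
    gcongr
  have hu_mem : ∀ i, u i ∈ Icc 0 1 := fun i =>
    ⟨by positivity, (div_le_one hN₀).mpr (by exact_mod_cast min_le_right i (N + 1))⟩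
  have hu_step : ∀ i, dist (u (i + 1)) (u i) ≤ 1 / (N + 1 : ℝ) := fun i => by
    have hsucc : ((min (i + 1) (N + 1) : ℕ) : ℝ) ≤ (min i (N + 1) : ℕ) + 1 := by
      exact_mod_cast (by omega : min (i + 1) (N + 1) ≤ min i (N + 1) + 1)
    rw [Real.dist_eq, abs_of_nonneg (sub_nonneg.mpr (hu_mono i.le_succ))]
    simp only [u, ← sub_div]
    gcongr
    linarith
  refine ⟨N + 1, u, hu_mono, hu_mem, by simp only [u, Nat.zero_min, Nat.cast_zero, zero_div],
    by simp only [u, min_self]; push_cast; exact div_self hN₀.ne', fun i => ?_⟩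
  exact hγε _ (hu_mem _) _ (hu_mem _) ((hu_step i).trans_lt hN)

lemma sum_dist_le_of_eVariationOn_le {γ : ℝ → α} {s : Set ℝ} {u : ℕ → ℝ} (hu : Monotone u)
    (hus : ∀ i, u i ∈ s) {V : ℝ} (hV₀ : 0 ≤ V) (hV : eVariationOn γ s ≤ ENNReal.ofReal V)
    (N : ℕ) : ∑ i ∈ Finset.range N, dist (γ (u (i + 1))) (γ (u i)) ≤ V := by
  rw [← ENNReal.ofReal_le_ofReal_iff hV₀,
    ENNReal.ofReal_sum_of_nonneg fun i _ => dist_nonneg]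
  simpa only [← edist_dist] using (eVariationOn.sum_le hu hus).trans hV

lemma dist_map_path_endpoints_le_mul {K : Set α} {f : α → β} {c δ : ℝ} (hc : 0 ≤ c)
    (hδ : 0 < δ) (hf : ∀ x ∈ K, ∀ y ∈ K, dist x y < δ → dist (f x) (f y) ≤ c * dist x y)
    {γ : ℝ → α} (hγ : ContinuousOn γ (Icc 0 1)) (hγK : MapsTo γ (Icc 0 1) K)
    {V : ℝ} (hV₀ : 0 ≤ V) (hV : eVariationOn γ (Icc 0 1) ≤ ENNReal.ofReal V) :
    dist (f (γ 0)) (f (γ 1)) ≤ c * V := by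
  obtain ⟨N, u, hu, hu_mem, hu0, huN, hu_step⟩ :=
    exists_monotone_Icc_subdivision_dist_lt hγ hδ
  have hstep : ∀ i, dist (f (γ (u i))) (f (γ (u (i + 1)))) ≤
      c * dist (γ (u (i + 1))) (γ (u i)) := fun i => by
    rw [dist_comm (γ (u (i + 1)))]
    exact hf _ (hγK (hu_mem i)) _ (hγK (hu_mem (i + 1))) (dist_comm (γ _) _ ▸ hu_step i)
  calc dist (f (γ 0)) (f (γ 1)) = dist (f (γ (u 0))) (f (γ (u N))) := by rw [hu0, huN]
    _ ≤ ∑ i ∈ Finset.range N, dist (f (γ (u i))) (f (γ (u (i + 1)))) :=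
      dist_le_range_sum_dist (fun i => f (γ (u i))) N
    _ ≤ ∑ i ∈ Finset.range N, c * dist (γ (u (i + 1))) (γ (u i)) :=
      Finset.sum_le_sum fun i _ => hstep i
    _ ≤ c * V := by
      rw [← Finset.mul_sum]
      exact mul_le_mul_of_nonneg_left (sum_dist_le_of_eVariationOn_le hu hu_mem hV₀ hV N) hc

end

theorem stmt_5_general (n : ℕ) (K : Set (EuclideanSpace ℝ (Fin n)))
    (Λ : ℝ) (hΛ : 0 < Λ)
    (hpath : ∀ x₀ ∈ K, ∀ y₀ ∈ K, ∃ γ : ℝ → EuclideanSpace ℝ (Fin n),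
      γ 0 = x₀ ∧ γ 1 = y₀ ∧ Set.MapsTo γ (Set.Icc 0 1) K ∧
      (∃ L : NNReal, LipschitzOnWith L γ (Set.Icc 0 1)) ∧
      eVariationOn γ (Set.Icc 0 1) ≤ ENNReal.ofReal (Λ * ‖x₀ - y₀‖))
    (φ : ℝ → EuclideanSpace ℝ (Fin n) → EuclideanSpace ℝ (Fin n))
    (δ C ν : ℝ) (hδ : 0 < δ) (hC : 0 < C)
    (hlocal : ∀ x₀ ∈ K, ∀ y₀ ∈ K, ‖x₀ - y₀‖ < δ → ∀ t, 0 ≤ t →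
      ‖φ t x₀ - φ t y₀‖ ≤ C * Real.exp (-ν * t) * ‖x₀ - y₀‖) :
    ∀ x₀ ∈ K, ∀ y₀ ∈ K, ∀ t, 0 ≤ t →
      ‖φ t x₀ - φ t y₀‖ ≤ C * Λ * Real.exp (-ν * t) * ‖x₀ - y₀‖ := by
  intro x₀ hx₀ y₀ hy₀ t ht
  obtain ⟨γ, hγ0, hγ1, hγK, ⟨L, hL⟩, hvar⟩ := hpath x₀ hx₀ y₀ hy₀
  have hφt : ∀ x ∈ K, ∀ y ∈ K, dist x y < δ →
      dist (φ t x) (φ t y) ≤ C * Real.exp (-ν * t) * dist x y := by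
    simpa only [dist_eq_norm] using fun x hx y hy hxy => hlocal x hx y hy hxy t ht
  have key := dist_map_path_endpoints_le_mul (by positivity) hδ hφt hL.continuousOn hγK
    (by positivity) hvar
  rw [hγ0, hγ1, dist_eq_norm] at key
  linarith

/-- Local-to-global contraction: local exponential contraction together with
uniformly short Lipschitz paths in `K` yields global exponential contraction
with constant `C Λ`. -/
theorem stmt_5 (n : ℕ) (K : Set (EuclideanSpace ℝ (Fin n)))
    (hK : IsCompact K) (hKpc : IsPathConnected K)
    (Λ : ℝ) (hΛ : 0 < Λ)
    (hpath : ∀ x₀ ∈ K, ∀ y₀ ∈ K, ∃ γ : ℝ → EuclideanSpace ℝ (Fin n),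
      γ 0 = x₀ ∧ γ 1 = y₀ ∧ Set.MapsTo γ (Set.Icc 0 1) K ∧
      (∃ L : NNReal, LipschitzOnWith L γ (Set.Icc 0 1)) ∧
      eVariationOn γ (Set.Icc 0 1) ≤ ENNReal.ofReal (Λ * ‖x₀ - y₀‖))
    (φ : ℝ → EuclideanSpace ℝ (Fin n) → EuclideanSpace ℝ (Fin n))
    (hinv : ∀ t, 0 ≤ t → Set.MapsTo (φ t) K K)
    (δ C ν : ℝ) (hδ : 0 < δ) (hC : 0 < C) (hν : 0 < ν)
    (hlocal : ∀ x₀ ∈ K, ∀ y₀ ∈ K, ‖x₀ - y₀‖ < δ → ∀ t, 0 ≤ t →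
      ‖φ t x₀ - φ t y₀‖ ≤ C * Real.exp (-ν * t) * ‖x₀ - y₀‖) :
    ∀ x₀ ∈ K, ∀ y₀ ∈ K, ∀ t, 0 ≤ t →
      ‖φ t x₀ - φ t y₀‖ ≤ C * Λ * Real.exp (-ν * t) * ‖x₀ - y₀‖ :=
  stmt_5_general n K Λ hΛ hpath φ δ C ν hδ hC hlocal
end

section
/- Under the hypotheses of the previous estimate, if additionally δ C_σ (μ ε + 1) < (1/2) min(μ, α), then for all (t,x) with x₁ ∉ {0} one has W'(t,x) + λ_max(S_f) ≤ −ν, where λ_max(S_f) = −min(μ, α) is the maximum eigenvalue of the symmetric part of the Jacobian of f^±, and ν := (1/2) min(μ, α) > 0. -/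
/-- If `δ C_σ (με + 1) < (1/2) min(μ, α)`, then away from the switching
manifold the smooth contraction condition `W' + λ_max(S_f) ≤ -ν` holds with
`ν = (1/2) min(μ, α)`, where `λ_max(S_f) = -min(μ, α)`. -/
theorem stmt_13 (μ α δ ε Cσ : ℝ)
    (hμ : 0 < μ) (hα : 0 < α) (hδ : 0 < δ) (hε : 0 < ε)
    (σ : ℝ → ℝ) (hσC1 : ContDiff ℝ 1 σ)
    (hσrange : ∀ s, σ s ∈ Set.Icc (0:ℝ) 1)
    (hsupp : ∀ s : ℝ, ε ≤ |s| → deriv σ s = 0)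
    (hCσ : ∀ s : ℝ, |deriv σ s| ≤ Cσ)
    (hsmall : δ * Cσ * (μ * ε + 1) < (1/2) * min μ α)
    (ν : ℝ) (hν : ν = (1/2) * min μ α) :
    ∀ t x₁ sgn : ℝ, sgn = 1 ∨ sgn = -1 → x₁ ≠ 0 →
      (-δ) * deriv σ x₁ * (-μ * x₁ + sgn * Real.sin t) + (-min μ α) ≤ -ν := by
  intro t x₁ sgn hsgn hx
  have hmin : 0 < min μ α := lt_min hμ hα
  have key : (-δ) * deriv σ x₁ * (-μ * x₁ + sgn * Real.sin t)
      ≤ δ * Cσ * (μ * ε + 1) := by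
    by_cases h : ε ≤ |x₁|
    · rw [hsupp x₁ h]
      have : 0 ≤ δ * Cσ * (μ * ε + 1) := by
        have hCσ0 : 0 ≤ Cσ := le_trans (abs_nonneg _) (hCσ 0)
        positivity
      linarith [this]
    · push_neg at h
      have habs : |(-δ) * deriv σ x₁ * (-μ * x₁ + sgn * Real.sin t)|
          ≤ δ * Cσ * (μ * ε + 1) := by
        rw [abs_mul, abs_mul, abs_neg, abs_of_pos hδ]
        have h1 : |(-μ * x₁ + sgn * Real.sin t)| ≤ μ * ε + 1 := by
          calc |(-μ * x₁ + sgn * Real.sin t)| ≤ |(-μ * x₁)| + |sgn * Real.sin t| :=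
                abs_add_le _ _
            _ ≤ μ * ε + 1 := by
                have : |(-μ * x₁)| = μ * |x₁| := by
                  rw [abs_mul, abs_neg, abs_of_pos hμ]
                rw [this, abs_mul]
                have hs : |sgn| = 1 := by rcases hsgn with h | h <;> simp [h]
                rw [hs, one_mul]
                have := Real.abs_sin_le_one t
                nlinarith [abs_nonneg x₁]
        have h2 := hCσ x₁
        have hd0 : 0 ≤ |deriv σ x₁| := abs_nonneg _
        have hCσ0 : 0 ≤ Cσ := le_trans hd0 h2
        exact mul_le_mul (mul_le_mul_of_nonneg_left h2 hδ.le) h1 (abs_nonneg _)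
          (by positivity)
      linarith [le_abs_self ((-δ) * deriv σ x₁ * (-μ * x₁ + sgn * Real.sin t)), habs]
  linarith [hsmall, key]
end

section
/- Let F : ℝ × ℝ² ⇉ ℝ² be a set-valued map, K a set, and suppose there exist ν, ε > 0 such that for all t and all x ≠ y in K ∩ Σ, every v_x ∈ F(t,x) and v_y ∈ F(t,y) satisfy ⟨(x−y)/‖x−y‖, v_x − v_y⟩ ≤ −(ν + ε). Then any two solutions x(t), y(t) with x'(t) ∈ F(t,x(t)), y'(t) ∈ F(t,y(t)) a.e., remaining in K ∩ Σ with x(t) ≠ y(t) on an interval, satisfy (d/dt)‖x(t) − y(t)‖ ≤ −(ν + ε) for almost every t in that interval; in particular ‖x(t) − y(t)‖ ≤ ‖x(0) − y(0)‖ − (ν + ε) t as long as the right side stays positive. -/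
open MeasureTheory Filter Set
open scoped RealInnerProductSpace

/-! The distance `‖x - y‖` is Lipschitz, hence absolutely continuous, so it is the integral of its
a.e. derivative `⟪(x - y)/‖x - y‖, x' - y'⟫`, which the directional contraction bounds by
`-(ν + ε)`. -/

theorem HasDerivAt.norm_of_ne_zero {E : Type*} [NormedAddCommGroup E] [InnerProductSpace ℝ E]
    {g : ℝ → E} {g' : E} {t : ℝ} (hg : HasDerivAt g g' t) (h0 : g t ≠ 0) :
    HasDerivAt (fun s => ‖g s‖) ⟪‖g t‖⁻¹ • g t, g'⟫ t := by
  have hpos : 0 < ‖g t‖ := norm_pos_iff.2 h0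
  have hsqrt := hg.norm_sq.sqrt (pow_pos hpos 2).ne'
  simp only [Real.sqrt_sq (norm_nonneg _)] at hsqrt
  convert hsqrt using 1
  rw [real_inner_smul_left]
  field_simp

theorem AbsolutelyContinuousOnInterval.sub_le_mul_of_ae_deriv_le {f : ℝ → ℝ} {a b C : ℝ}
    (hf : AbsolutelyContinuousOnInterval f a b) (hab : a ≤ b)
    (hderiv : ∀ᵐ t ∂volume, t ∈ Ioo a b → deriv f t ≤ C) :
    f b - f a ≤ C * (b - a) := by
  have hint : ∫ t in a..b, deriv f t ≤ ∫ _ in a..b, C := by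
    rw [intervalIntegral.integral_of_le hab, intervalIntegral.integral_of_le hab,
      integral_Ioc_eq_integral_Ioo, integral_Ioc_eq_integral_Ioo]
    refine setIntegral_mono_ae_restrict ?_ (integrableOn_const (by simp))
      ((ae_restrict_iff' measurableSet_Ioo).2 hderiv)
    exact hf.intervalIntegrable_deriv.1.mono_set Ioo_subset_Ioc_self
  rwa [hf.integral_deriv_eq_sub, intervalIntegral.integral_const, smul_eq_mul, mul_comm] at hint

theorem stmt_19_general (n : ℕ)
    (F : ℝ → EuclideanSpace ℝ (Fin n) → Set (EuclideanSpace ℝ (Fin n)))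
    (K Sig : Set (EuclideanSpace ℝ (Fin n)))
    (ν ε : ℝ)
    (hdir : ∀ t : ℝ, ∀ x ∈ K ∩ Sig, ∀ y ∈ K ∩ Sig, x ≠ y →
      ∀ vx ∈ F t x, ∀ vy ∈ F t y,
        ⟪(‖x - y‖)⁻¹ • (x - y), vx - vy⟫ ≤ -(ν + ε))
    (a b : ℝ)
    (x y : ℝ → EuclideanSpace ℝ (Fin n))
    (x' y' : ℝ → EuclideanSpace ℝ (Fin n))
    (Lx Ly : NNReal)
    (hxLip : LipschitzOnWith Lx x (Set.Icc a b))
    (hyLip : LipschitzOnWith Ly y (Set.Icc a b))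
    (hx : ∀ᵐ t ∂volume, t ∈ Set.Ioo a b →
      HasDerivAt x (x' t) t ∧ x' t ∈ F t (x t))
    (hy : ∀ᵐ t ∂volume, t ∈ Set.Ioo a b →
      HasDerivAt y (y' t) t ∧ y' t ∈ F t (y t))
    (hmem : ∀ t ∈ Set.Icc a b, x t ∈ K ∩ Sig ∧ y t ∈ K ∩ Sig)
    (hne : ∀ t ∈ Set.Icc a b, x t ≠ y t) :
    (∀ᵐ t ∂volume, t ∈ Set.Ioo a b →
      deriv (fun s => ‖x s - y s‖) t ≤ -(ν + ε)) ∧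
    (∀ t ∈ Set.Icc a b, 0 < ‖x a - y a‖ - (ν + ε) * (t - a) →
      ‖x t - y t‖ ≤ ‖x a - y a‖ - (ν + ε) * (t - a)) := by
  have hderiv :
      ∀ᵐ t ∂volume, t ∈ Ioo a b → deriv (fun s => ‖x s - y s‖) t ≤ -(ν + ε) := by
    filter_upwards [hx, hy] with t hxt hyt ht
    obtain ⟨hxd, hxF⟩ := hxt ht
    obtain ⟨hyd, hyF⟩ := hyt ht
    have htI := Ioo_subset_Icc_self ht
    rw [((hxd.fun_sub hyd).norm_of_ne_zero (sub_ne_zero.2 (hne t htI))).deriv]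
    exact hdir t _ (hmem t htI).1 _ (hmem t htI).2 (hne t htI) _ hxF _ hyF
  refine ⟨hderiv, fun t ht _ => ?_⟩
  have hLip : LipschitzOnWith (1 * (Lx + Ly)) (fun s => ‖x s - y s‖) (Icc a b) :=
    lipschitzWith_one_norm.comp_lipschitzOnWith (hxLip.sub hyLip)
  have hAC : AbsolutelyContinuousOnInterval (fun s => ‖x s - y s‖) a t :=
    (hLip.mono (uIcc_subset_Icc (left_mem_Icc.2 (ht.1.trans ht.2)) ht)
      ).absolutelyContinuousOnInterval
  have := hAC.sub_le_mul_of_ae_deriv_le ht.1 <| by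
    filter_upwards [hderiv] with s hs hst
    exact hs (Ioo_subset_Ioo_right ht.2 hst)
  linarith

/-- Uniform directional contraction of the Filippov set-valued map on `K ∩ Σ`
forces the distance between two solutions staying in `K ∩ Σ` to decrease at
rate `ν + ε`, and hence linearly in time. -/
theorem stmt_19 (n : ℕ)
    (F : ℝ → EuclideanSpace ℝ (Fin n) → Set (EuclideanSpace ℝ (Fin n)))
    (K Sig : Set (EuclideanSpace ℝ (Fin n)))
    (ν ε : ℝ) (hν : 0 < ν) (hε : 0 < ε)
    (hdir : ∀ t : ℝ, ∀ x ∈ K ∩ Sig, ∀ y ∈ K ∩ Sig, x ≠ y →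
      ∀ vx ∈ F t x, ∀ vy ∈ F t y,
        ⟪(‖x - y‖)⁻¹ • (x - y), vx - vy⟫ ≤ -(ν + ε))
    (a b : ℝ) (hab : a < b)
    (x y : ℝ → EuclideanSpace ℝ (Fin n))
    (x' y' : ℝ → EuclideanSpace ℝ (Fin n))
    (Lx Ly : NNReal)
    (hxLip : LipschitzOnWith Lx x (Set.Icc a b))
    (hyLip : LipschitzOnWith Ly y (Set.Icc a b))
    (hx : ∀ᵐ t ∂volume, t ∈ Set.Ioo a b →
      HasDerivAt x (x' t) t ∧ x' t ∈ F t (x t))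
    (hy : ∀ᵐ t ∂volume, t ∈ Set.Ioo a b →
      HasDerivAt y (y' t) t ∧ y' t ∈ F t (y t))
    (hmem : ∀ t ∈ Set.Icc a b, x t ∈ K ∩ Sig ∧ y t ∈ K ∩ Sig)
    (hne : ∀ t ∈ Set.Icc a b, x t ≠ y t) :
    (∀ᵐ t ∂volume, t ∈ Set.Ioo a b →
      deriv (fun s => ‖x s - y s‖) t ≤ -(ν + ε)) ∧
    (∀ t ∈ Set.Icc a b, 0 < ‖x a - y a‖ - (ν + ε) * (t - a) →
      ‖x t - y t‖ ≤ ‖x a - y a‖ - (ν + ε) * (t - a)) :=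
  stmt_19_general n F K Sig ν ε hdir a b x y x' y' Lx Ly hxLip hyLip hx hy hmem hne
end
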